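/- arXiv:1802.07995 — 3 statements merged into one kernel-verified Lean document; each statement's English description precedes it below -/
import Mathlib

section
/- Let $\mathcal{S}^*$ denote the set of all closed axis-parallel hyperrectangles contained in $[0,1]^d$, equipped with the metric $\rho^*(S_1, S_2) = \sqrt{|S_1 \triangle S_2|}$ where $|\cdot|$ is Lebesgue measure. Then for any $\epsilon > 0$ there exists a constant $C$ depending only on $d$ and $\epsilon$ such that for all $u, \delta \in (0,1]$, the packing number satisfies $\mathcal{K}((\delta u)^{1/2}, \rho^*, \{S \in \mathcal{S}^* : |S| \le \delta\}) \le C\, u^{-(2d+\epsilon)} \delta^{-(2d-1+\epsilon)}$. -/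
open MeasureTheory

/-- The symmetric-difference pseudometric `ρ*(A,B) = √|A △ B|`. -/
noncomputable def rhoStar {d : ℕ} (A B : Set (Fin d → ℝ)) : ℝ :=
  Real.sqrt ((volume (symmDiff A B)).toReal)

open Finset

lemma exists_dyadic {ℓ : ℝ} (h0 : 0 < ℓ) (h1 : ℓ ≤ 1) :
    ∃ k : ℕ, (2⁻¹:ℝ)^(k+1) < ℓ ∧ ℓ ≤ (2⁻¹)^k := by
  classical
  have hex : ∃ n:ℕ, (2⁻¹:ℝ)^n < ℓ := exists_pow_lt_of_lt_one h0 (by norm_num)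
  have hspec : (2⁻¹:ℝ)^(Nat.find hex) < ℓ := Nat.find_spec hex
  have hn0 : Nat.find hex ≠ 0 := by
    intro h; rw [h] at hspec; norm_num at hspec; linarith
  obtain ⟨k, hk⟩ : ∃ k, Nat.find hex = k + 1 := ⟨Nat.find hex - 1, (Nat.succ_pred_eq_of_ne_zero hn0).symm⟩
  refine ⟨k, by rw [← hk]; exact hspec, ?_⟩
  have := Nat.find_min hex (m := k) (by omega)
  push_neg at this; exact this

lemma abs_sub_lt_of_floor_div_eq {h x y : ℝ} (hh : 0 < h) (hx : 0 ≤ x) (hy : 0 ≤ y)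
    (he : ⌊x/h⌋₊ = ⌊y/h⌋₊) : |x - y| < h := by
  have h1 : (⌊x/h⌋₊ : ℝ) ≤ x/h := Nat.floor_le (by positivity)
  have h2 : x/h < ⌊x/h⌋₊ + 1 := Nat.lt_floor_add_one _
  have h3 : (⌊y/h⌋₊ : ℝ) ≤ y/h := Nat.floor_le (by positivity)
  have h4 : y/h < ⌊y/h⌋₊ + 1 := Nat.lt_floor_add_one _
  rw [he] at h1 h2
  rw [abs_sub_lt_iff]
  constructor
  · have : (x - y)/h < 1 := by rw [sub_div]; linarith
    linarith [(div_lt_one hh).mp this]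
  · have : (y - x)/h < 1 := by rw [sub_div]; linarith
    linarith [(div_lt_one hh).mp this]


lemma diff_Icc_subset {d : ℕ} (s t s' t' : Fin d → ℝ) :
    Set.Icc s t \ Set.Icc s' t' ⊆
      ⋃ i, Set.univ.pi (fun i' =>
        if i' = i then
          Set.Icc (min (s i) (s' i)) (max (s i) (s' i)) ∪
          Set.Icc (min (t i) (t' i)) (max (t i) (t' i))
        else Set.Icc (min (s i') (s' i')) (max (t i') (t' i'))) := by
  rintro x ⟨hx1, hx2⟩
  rw [Set.mem_Icc] at hx1
  obtain ⟨hxs, hxt⟩ := hx1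
  have hx2' : ∃ i, x i < s' i ∨ t' i < x i := by
    by_contra hc
    push_neg at hc
    exact hx2 (Set.mem_Icc.mpr ⟨fun i => (hc i).1, fun i => (hc i).2⟩)
  obtain ⟨i, hi⟩ := hx2'
  refine Set.mem_iUnion.mpr ⟨i, ?_⟩
  rw [Set.mem_univ_pi]
  intro i'
  by_cases hii : i' = i
  · subst hii
    simp only [if_pos rfl]
    rcases hi with hi | hi
    · left
      exact Set.mem_Icc.mpr ⟨le_trans (min_le_left _ _) (hxs i'),
        le_trans hi.le (le_max_right _ _)⟩
    · right
      exact Set.mem_Icc.mpr ⟨le_trans (min_le_right _ _) hi.le,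
        le_trans (hxt i') (le_max_left _ _)⟩
  · simp only [if_neg hii]
    exact Set.mem_Icc.mpr ⟨le_trans (min_le_left _ _) (hxs i'),
      le_trans (hxt i') (le_max_left _ _)⟩

lemma vol_symmDiff_Icc_le {d : ℕ} (s t s' t' : Fin d → ℝ) (w W : Fin d → ℝ)
    (hw0 : ∀ i, 0 ≤ w i) (hW0 : ∀ i, 0 ≤ W i)
    (hw : ∀ i, (max (s i) (s' i) - min (s i) (s' i)) + (max (t i) (t' i) - min (t i) (t' i)) ≤ w i)
    (hW : ∀ i, max (t i) (t' i) - min (s i) (s' i) ≤ W i) :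
    volume (symmDiff (Set.Icc s t) (Set.Icc s' t')) ≤
      ENNReal.ofReal (∑ i, w i * ∏ i' ∈ univ.erase i, W i') := by
  set Bs : Fin d → Set (Fin d → ℝ) := fun i => Set.univ.pi (fun i' =>
        if i' = i then
          Set.Icc (min (s i) (s' i)) (max (s i) (s' i)) ∪
          Set.Icc (min (t i) (t' i)) (max (t i) (t' i))
        else Set.Icc (min (s i') (s' i')) (max (t i') (t' i'))) with hBs
  have hsub : symmDiff (Set.Icc s t) (Set.Icc s' t') ⊆ ⋃ i, Bs i := by
    rw [Set.symmDiff_def]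
    apply Set.union_subset
    · exact diff_Icc_subset s t s' t'
    · refine (diff_Icc_subset s' t' s t).trans (le_of_eq ?_)
      congr 1
      funext i
      rw [hBs]
      congr 1
      funext i'
      by_cases hii : i' = i <;>
        simp [hii, min_comm, max_comm]
  refine (measure_mono hsub).trans ?_
  refine (measure_iUnion_fintype_le _ _).trans ?_
  have hterm : ∀ i, volume (Bs i) ≤ ENNReal.ofReal (w i * ∏ i' ∈ univ.erase i, W i') := by
    intro i
    rw [hBs]
    rw [volume_pi_pi]
    set g : Fin d → ℝ := fun i' => if i' = i then w i else W i' with hg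
    have hstep : ∀ i', volume (if i' = i then
          Set.Icc (min (s i) (s' i)) (max (s i) (s' i)) ∪
          Set.Icc (min (t i) (t' i)) (max (t i) (t' i))
        else Set.Icc (min (s i') (s' i')) (max (t i') (t' i'))) ≤ ENNReal.ofReal (g i') := by
      intro i'
      by_cases hii : i' = i
      · simp only [if_pos hii, hg]
        refine (measure_union_le _ _).trans ?_
        rw [Real.volume_Icc, Real.volume_Icc, ← ENNReal.ofReal_add (by simp) (by simp)]
        exact ENNReal.ofReal_le_ofReal (hw i)
      · simp only [if_neg hii, hg]
        rw [Real.volume_Icc]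
        exact ENNReal.ofReal_le_ofReal (hW i')
    refine (Finset.prod_le_prod' (fun i' _ => hstep i')).trans (le_of_eq ?_)
    rw [← ENNReal.ofReal_prod_of_nonneg]
    · congr 1
      rw [← Finset.mul_prod_erase univ g (mem_univ i)]
      rw [hg]
      simp only [if_pos rfl]
      congr 1
      exact Finset.prod_congr rfl (fun i' hi' => by
        simp [(Finset.mem_erase.mp hi').1])
    · intro i' _
      rw [hg]
      by_cases hii : i' = i <;> simp [hii, hw0, hW0]
  refine (Finset.sum_le_sum (fun i _ => hterm i)).trans (le_of_eq ?_)
  rw [← ENNReal.ofReal_sum_of_nonneg]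
  intro i _
  exact mul_nonneg (hw0 i) (Finset.prod_nonneg (fun i' _ => hW0 i'))


set_option maxHeartbeats 2000000 in
/-- Packing-number bound for hyperrectangles in `[0,1]^d` of volume at
most `δ`: any family of such rectangles with pairwise `ρ*`-distance exceeding
`(δu)^{1/2}` has at most `C u^{-(2d+ε)} δ^{-(2d-1+ε)}` members. -/
theorem packing_hyperrectangles (d : ℕ) (hd : 1 ≤ d) (ε : ℝ) (hε : 0 < ε) :
    ∃ C : ℝ, 0 < C ∧ ∀ u δ : ℝ, u ∈ Set.Ioc (0:ℝ) 1 → δ ∈ Set.Ioc (0:ℝ) 1 →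
      ∀ (m : ℕ) (s t : Fin m → (Fin d → ℝ)),
        (∀ j i, 0 ≤ s j i ∧ s j i ≤ t j i ∧ t j i ≤ 1) →
        (∀ j, (volume (Set.Icc (s j) (t j))).toReal ≤ δ) →
        (∀ j k, j ≠ k →
          Real.sqrt (δ * u) < rhoStar (Set.Icc (s j) (t j)) (Set.Icc (s k) (t k))) →
        (m : ℝ) ≤ C * u ^ (-(2 * (d : ℝ) + ε)) * δ ^ (-(2 * (d : ℝ) - 1 + ε)) := by
  classical
  have hd0 : (0:ℝ) < d := by exact_mod_cast hd
  have hdR : (1:ℝ) ≤ d := by exact_mod_cast hd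
  set a : ℝ := ε / d with ha
  have ha0 : 0 < a := div_pos hε hd0
  set c : ℝ := 3 * d * 2^d with hc
  have h2dpos : (0:ℝ) < 2^d := by positivity
  have h2d1 : (1:ℝ) ≤ 2^d := one_le_pow₀ (by norm_num)
  have hc2 : 2 ≤ c := by
    have : (1:ℝ) * 1 * 1 ≤ d * 2^d * 1 := by
      apply mul_le_mul (mul_le_mul hdR h2d1 (by norm_num) (by linarith)) (by norm_num) (by norm_num)
      positivity
    nlinarith
  have hc0 : 0 < c := by linarith
  set C₁ : ℝ := (2/a + 2) * 2 ^ a with hC₁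
  have hC₁0 : 0 < C₁ := by
    have : (0:ℝ) < 2 ^ a := Real.rpow_pos_of_pos (by norm_num) a
    have h2a : 0 < 2/a := by positivity
    positivity
  set C₂ : ℝ := (C₁ * (c+1) * (c*2^d+1))^d with hC₂
  have hC₂0 : 0 < C₂ := by positivity
  refine ⟨1 + C₂, by positivity, ?_⟩
  rintro u δ ⟨hu0, hu1⟩ ⟨hδ0, hδ1⟩ m s t hst hvol hsep
  have hδu0 : 0 < δ*u := mul_pos hδ0 hu0
  have hδu1 : δ*u ≤ 1 := by nlinarith
  set L : Fin m → Fin d → ℝ := fun j i => t j i - s j i with hL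
  have hL0 : ∀ j i, 0 ≤ L j i := fun j i => by
    have := hst j i; simp only [hL]; linarith [this.2.1]
  have hL1 : ∀ j i, L j i ≤ 1 := fun j i => by
    have := hst j i; simp only [hL]; linarith [this.1, this.2.2]
  set V : Fin m → ℝ := fun j => ∏ i, L j i with hV
  have hV0 : ∀ j, 0 ≤ V j := fun j => Finset.prod_nonneg (fun i _ => hL0 j i)
  have hvolIcc : ∀ j, volume (Set.Icc (s j) (t j)) = ENNReal.ofReal (V j) := by
    intro j
    rw [Real.volume_Icc_pi, hV, ENNReal.ofReal_prod_of_nonneg (fun i _ => hL0 j i)]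
  have hVδ : ∀ j, V j ≤ δ := by
    intro j
    have := hvol j
    rwa [hvolIcc j, ENNReal.toReal_ofReal (hV0 j)] at this
  have hsep' : ∀ j k, j ≠ k → ENNReal.ofReal (δ*u) <
      volume (symmDiff (Set.Icc (s j) (t j)) (Set.Icc (s k) (t k))) := by
    intro j k hjk
    have h := hsep j k hjk
    unfold rhoStar at h
    set T := volume (symmDiff (Set.Icc (s j) (t j)) (Set.Icc (s k) (t k))) with hT
    have hT1 : δ*u < T.toReal := by
      by_contra hcon
      push_neg at hcon
      exact absurd (Real.sqrt_le_sqrt hcon) (not_le.mpr h)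
    have hTtop : T ≠ ⊤ := by
      intro htop
      rw [htop] at hT1
      simp at hT1
      linarith
    exact (ENNReal.ofReal_lt_iff_lt_toReal hδu0.le hTtop).mpr hT1
  have hsd_le : ∀ j k, volume (symmDiff (Set.Icc (s j) (t j)) (Set.Icc (s k) (t k))) ≤
      ENNReal.ofReal (V j + V k) := by
    intro j k
    refine (measure_mono Set.symmDiff_subset_union).trans ?_
    refine (measure_union_le _ _).trans ?_
    rw [hvolIcc j, hvolIcc k, ENNReal.ofReal_add (hV0 j) (hV0 k)]
  have hsmall : ∀ j k, V j ≤ δ*u/2 → V k ≤ δ*u/2 → j = k := by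
    intro j k hj hk
    by_contra hjk
    have h1 := hsep' j k hjk
    have h2 := (hsd_le j k).trans (ENNReal.ofReal_le_ofReal (by linarith : V j + V k ≤ δ*u))
    exact absurd (h1.trans_le h2) (lt_irrefl _)
  set kk : Fin m → Fin d → ℕ := fun j i =>
    if h : 0 < L j i then Classical.choose (exists_dyadic h (hL1 j i)) else 0 with hkk
  have hkk_spec : ∀ j i, 0 < L j i →
      (2⁻¹:ℝ)^(kk j i + 1) < L j i ∧ L j i ≤ (2⁻¹)^(kk j i) := by
    intro j i h
    have := Classical.choose_spec (exists_dyadic h (hL1 j i))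
    simpa [hkk, dif_pos h] using this
  set Lb : Fin m → Fin d → ℝ := fun j i => (2⁻¹:ℝ)^(kk j i) with hLb
  have hLb_pos : ∀ j i, 0 < Lb j i := fun j i => by
    have : (0:ℝ) < (2⁻¹:ℝ)^(kk j i) := by positivity
    simpa [hLb] using this
  have hLb_le1 : ∀ j i, Lb j i ≤ 1 := fun j i => pow_le_one₀ (by norm_num) (by norm_num)
  set Vb : Fin m → ℝ := fun j => ∏ i, Lb j i with hVb
  have hVb_pos : ∀ j, 0 < Vb j := fun j => Finset.prod_pos (fun i _ => hLb_pos j i)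
  have hVb_le1 : ∀ j, Vb j ≤ 1 := fun j =>
    Finset.prod_le_one (fun i _ => (hLb_pos j i).le) (fun i _ => hLb_le1 j i)
  have hLV : ∀ j i, V j ≤ L j i := by
    intro j i
    have h1 : V j = L j i * ∏ i' ∈ univ.erase i, L j i' :=
      (Finset.mul_prod_erase univ _ (mem_univ i)).symm
    have h2 : ∏ i' ∈ univ.erase i, L j i' ≤ 1 :=
      Finset.prod_le_one (fun i' _ => hL0 j i') (fun i' _ => hL1 j i')
    have h3 : 0 ≤ ∏ i' ∈ univ.erase i, L j i' := Finset.prod_nonneg (fun i' _ => hL0 j i')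
    nlinarith [hL0 j i]
  have hLpos : ∀ j, δ*u/2 < V j → ∀ i, 0 < L j i := fun j hb i =>
    lt_of_lt_of_le (by linarith) (hLV j i)
  have hLLb : ∀ j, δ*u/2 < V j → ∀ i, L j i ≤ Lb j i := fun j hb i =>
    (hkk_spec j i (hLpos j hb i)).2
  have hLb2L : ∀ j, δ*u/2 < V j → ∀ i, Lb j i < 2 * L j i := by
    intro j hb i
    have h := (hkk_spec j i (hLpos j hb i)).1
    have h2 : (2⁻¹:ℝ)^(kk j i + 1) = Lb j i * 2⁻¹ := by rw [hLb, pow_succ]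
    rw [h2] at h
    calc Lb j i = 2 * (Lb j i * 2⁻¹) := by ring
      _ < 2 * L j i := mul_lt_mul_of_pos_left h (by norm_num)
  have hVVb : ∀ j, δ*u/2 < V j → V j ≤ Vb j := fun j hb =>
    Finset.prod_le_prod (fun i _ => hL0 j i) (fun i _ => hLLb j hb i)
  have hVb2V : ∀ j, δ*u/2 < V j → Vb j ≤ 2^d * V j := by
    intro j hb
    have h1 : Vb j ≤ ∏ i, (2 * L j i) :=
      Finset.prod_le_prod (fun i _ => (hLb_pos j i).le) (fun i _ => (hLb2L j hb i).le)
    have h2 : ∏ i, (2 * L j i) = 2^d * V j := by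
      rw [Finset.prod_mul_distrib, Finset.prod_const, hV]
      simp [Finset.card_univ]
    linarith
  set hg : Fin m → Fin d → ℝ := fun j i => δ*u*Lb j i/(c * Vb j) with hhg
  have hg_pos : ∀ j i, 0 < hg j i := fun j i => by
    have h1 := hLb_pos j i
    have h2 := hVb_pos j
    simp only [hhg]
    positivity
  have hcVb : ∀ j, δ*u/2 < V j → δ*u ≤ c * Vb j := by
    intro j hb
    have h1 := hVVb j hb
    have h2 := hVb_pos j
    nlinarith [mul_nonneg (sub_nonneg.mpr hc2) h2.le]
  have hgLb : ∀ j, δ*u/2 < V j → ∀ i, hg j i ≤ Lb j i := by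
    intro j hb i
    have h1 := hcVb j hb
    have h2 := hVb_pos j
    have h3 : (0:ℝ) < c * Vb j := by positivity
    rw [hhg]
    simp only
    rw [div_le_iff₀ h3]
    calc δ*u*Lb j i = Lb j i * (δ*u) := by ring
      _ ≤ Lb j i * (c * Vb j) := mul_le_mul_of_nonneg_left h1 (hLb_pos j i).le
      _ = Lb j i * (c * Vb j) := rfl
  set aa : Fin m → Fin d → ℕ := fun j i => ⌊s j i / hg j i⌋₊ with haa
  set bb : Fin m → Fin d → ℕ := fun j i => ⌊L j i / hg j i⌋₊ with hbb
  have hinj : ∀ j k, δ*u/2 < V j → δ*u/2 < V k → kk j = kk k → aa j = aa k →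
      bb j = bb k → j = k := by
    intro j k hbj hbk hkke haae hbbe
    by_contra hjk
    have hLbe : Lb j = Lb k := by
      funext i
      simp only [hLb, hkke]
    have hVbe : Vb j = Vb k := by
      simp only [hVb, hLbe]
    have hge : ∀ i, hg j i = hg k i := fun i => by
      simp only [hhg, hVbe]
      rw [congrFun hLbe i]
    have hΔs : ∀ i, |s j i - s k i| < hg j i := by
      intro i
      have h1 : ⌊s j i / hg j i⌋₊ = ⌊s k i / hg k i⌋₊ := by
        have := congrFun haae i
        simpa only [haa] using this
      rw [← hge i] at h1
      exact abs_sub_lt_of_floor_div_eq (hg_pos j i) (hst j i).1 (hst k i).1 h1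
    have hΔL : ∀ i, |L j i - L k i| < hg j i := by
      intro i
      have h1 : ⌊L j i / hg j i⌋₊ = ⌊L k i / hg k i⌋₊ := by
        have := congrFun hbbe i
        simpa only [hbb] using this
      rw [← hge i] at h1
      exact abs_sub_lt_of_floor_div_eq (hg_pos j i) (hL0 j i) (hL0 k i) h1
    have hΔt : ∀ i, |t j i - t k i| < 2 * hg j i := by
      intro i
      have e1 : t j i - t k i = (s j i - s k i) + (L j i - L k i) := by
        simp only [hL]
        ring
      rw [e1]
      calc |(s j i - s k i) + (L j i - L k i)| ≤ |s j i - s k i| + |L j i - L k i| :=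
            abs_add_le _ _
        _ < 2 * hg j i := by
            have := hΔs i
            have := hΔL i
            linarith
    have hw : ∀ i, (max (s j i) (s k i) - min (s j i) (s k i)) +
        (max (t j i) (t k i) - min (t j i) (t k i)) ≤ 3 * hg j i := by
      intro i
      rw [max_sub_min_eq_abs, max_sub_min_eq_abs]
      have h1 := hΔs i
      have h2 := hΔt i
      have e1 := abs_sub_comm (s j i) (s k i)
      have e2 := abs_sub_comm (t j i) (t k i)
      linarith
    have hW : ∀ i, max (t j i) (t k i) - min (s j i) (s k i) ≤ 2 * Lb j i := by
      intro i
      have e1 : t j i = s j i + L j i := by simp only [hL]; ring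
      have e2 : t k i = s k i + L k i := by simp only [hL]; ring
      have h1 : t j i ≤ max (s j i) (s k i) + Lb j i := by
        have h2 := hLLb j hbj i
        have h3 := le_max_left (s j i) (s k i)
        linarith
      have h1' : t k i ≤ max (s j i) (s k i) + Lb j i := by
        have h2 := hLLb k hbk i
        have h2' : Lb k i = Lb j i := (congrFun hLbe i).symm
        have h3 := le_max_right (s j i) (s k i)
        linarith
      have h7 : max (t j i) (t k i) ≤ max (s j i) (s k i) + Lb j i := max_le h1 h1'
      have h4 : max (s j i) (s k i) - min (s j i) (s k i) = |s j i - s k i| :=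
        (max_sub_min_eq_abs _ _).trans (abs_sub_comm _ _)
      have h5 := hΔs i
      have h6 := hgLb j hbj i
      linarith
    have hsum : ∑ i, (3 * hg j i) * ∏ i' ∈ univ.erase i, (2 * Lb j i') ≤ δ * u := by
      have hterm : ∀ i : Fin d, (3 * hg j i) * ∏ i' ∈ univ.erase i, (2 * Lb j i') =
          3 * 2^(d-1) * (δ*u) / c := by
        intro i
        have e1 : ∏ i' ∈ univ.erase i, ((2:ℝ) * Lb j i') =
            2^(d-1) * ∏ i' ∈ univ.erase i, Lb j i' := by
          rw [Finset.prod_mul_distrib, Finset.prod_const]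
          congr 2
          rw [Finset.card_erase_of_mem (mem_univ i), Finset.card_univ, Fintype.card_fin]
        have e2 : Lb j i * ∏ i' ∈ univ.erase i, Lb j i' = Vb j :=
          Finset.mul_prod_erase univ _ (mem_univ i)
        have hLbne : Lb j i ≠ 0 := (hLb_pos j i).ne'
        have e3 : ∏ i' ∈ univ.erase i, Lb j i' = Vb j / Lb j i := by
          rw [eq_div_iff hLbne]
          rw [← e2]
          ring
        rw [e1, e3]
        simp only [hhg]
        have hVbne : Vb j ≠ 0 := (hVb_pos j).ne'
        field_simp
      rw [Finset.sum_congr rfl (fun i _ => hterm i), Finset.sum_const, Finset.card_univ,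
        Fintype.card_fin, nsmul_eq_mul]
      have h2dd : (2:ℝ)^d = 2 * 2^(d-1) := by
        rw [← pow_succ']
        congr 1
        omega
      have hkey : c = (d:ℝ) * (3 * 2^(d-1)) * 2 := by
        rw [hc, h2dd]
        ring
      have hp : (0:ℝ) < 2^(d-1) := by positivity
      have heq : (d:ℝ) * (3 * 2^(d-1) * (δ*u) / c) = δ*u/2 := by
        rw [hkey]
        field_simp
      rw [heq]
      linarith
    have hw0 : ∀ i, 0 ≤ 3 * hg j i := fun i => by linarith [hg_pos j i]
    have hW0 : ∀ i, 0 ≤ 2 * Lb j i := fun i => by linarith [hLb_pos j i]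
    have hvol_le := vol_symmDiff_Icc_le (s j) (t j) (s k) (t k)
      (fun i => 3 * hg j i) (fun i => 2 * Lb j i) hw0 hW0 hw hW
    have hcontr := (hsep' j k hjk).trans_le
      (hvol_le.trans (ENNReal.ofReal_le_ofReal hsum))
    exact absurd hcontr (lt_irrefl _)
  have hVbLb : ∀ j i, Vb j ≤ Lb j i := by
    intro j i
    have h1 : Vb j = Lb j i * ∏ i' ∈ univ.erase i, Lb j i' :=
      (Finset.mul_prod_erase univ _ (mem_univ i)).symm
    have h2 : ∏ i' ∈ univ.erase i, Lb j i' ≤ 1 :=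
      Finset.prod_le_one (fun i' _ => (hLb_pos j i').le) (fun i' _ => hLb_le1 j i')
    have h3 : 0 ≤ ∏ i' ∈ univ.erase i, Lb j i' :=
      Finset.prod_nonneg (fun i' _ => (hLb_pos j i').le)
    nlinarith [(hLb_pos j i).le]
  set K : ℕ := ⌈Real.logb 2 (2/(δ*u))⌉₊ with hKdef
  have hyge1 : (1:ℝ) ≤ 2/(δ*u) := by
    rw [le_div_iff₀ hδu0]
    linarith
  have hlogb0 : 0 ≤ Real.logb 2 (2/(δ*u)) := Real.logb_nonneg (by norm_num) hyge1
  have hKb : (2⁻¹:ℝ)^K ≤ δ*u/2 := by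
    have h1 : Real.logb 2 (2/(δ*u)) ≤ (K:ℝ) := Nat.le_ceil _
    have h2 : (2:ℝ)/(δ*u) ≤ 2^(K:ℝ) := by
      calc (2:ℝ)/(δ*u) = 2 ^ Real.logb 2 (2/(δ*u)) :=
            (Real.rpow_logb (by norm_num) (by norm_num) (by positivity)).symm
        _ ≤ 2^(K:ℝ) := Real.rpow_le_rpow_of_exponent_le (by norm_num) h1
    rw [Real.rpow_natCast] at h2
    have h3 : ((2:ℝ)^K)⁻¹ ≤ (2/(δ*u))⁻¹ := inv_anti₀ (by positivity) h2
    rw [inv_div] at h3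
    rw [inv_pow]
    exact h3
  have hKK : ∀ j, δ*u/2 < V j → ∀ i, kk j i ≤ K := by
    intro j hb i
    have h1 : (2⁻¹:ℝ)^K < (2⁻¹:ℝ)^(kk j i) := by
      have h2 : L j i ≤ (2⁻¹:ℝ)^(kk j i) := (hkk_spec j i (hLpos j hb i)).2
      exact hKb.trans_lt (hb.trans_le ((hLV j i).trans h2))
    have := (pow_lt_pow_iff_right_of_lt_one₀ (by norm_num : (0:ℝ) < 2⁻¹)
      (by norm_num : (2⁻¹:ℝ) < 1)).mp h1
    omega
  set A : ℕ := ⌊c/(δ*u)⌋₊ with hAdef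
  set B : ℕ := ⌊c*2^d/u⌋₊ with hBdef
  have haA : ∀ j, δ*u/2 < V j → ∀ i, aa j i ≤ A := by
    intro j hb i
    apply Nat.floor_le_floor
    have hs1 : s j i ≤ 1 := le_trans (hst j i).2.1 (hst j i).2.2
    have e : c * hg j i = δ*u*(Lb j i/Vb j) := by
      simp only [hhg]
      field_simp
    rw [div_le_div_iff₀ (hg_pos j i) hδu0]
    have h5 : 1 ≤ Lb j i / Vb j := (one_le_div (hVb_pos j)).mpr (hVbLb j i)
    calc s j i * (δ*u) ≤ 1*(δ*u) := mul_le_mul_of_nonneg_right hs1 hδu0.le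
      _ ≤ (δ*u) * (Lb j i/Vb j) := by
          rw [one_mul]
          exact le_mul_of_one_le_right hδu0.le h5
      _ = c * hg j i := e.symm
  have hbB : ∀ j, δ*u/2 < V j → ∀ i, bb j i ≤ B := by
    intro j hb i
    apply Nat.floor_le_floor
    have hLbne : Lb j i ≠ 0 := (hLb_pos j i).ne'
    have hVbne : Vb j ≠ 0 := (hVb_pos j).ne'
    have e : Lb j i / hg j i = c * Vb j / (δ*u) := by
      simp only [hhg]
      field_simp
    have h1 : L j i / hg j i ≤ Lb j i / hg j i :=
      (div_le_div_iff_of_pos_right (hg_pos j i)).mpr (hLLb j hb i)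
    have h2 : c * Vb j / (δ*u) ≤ c*2^d/u := by
      rw [div_le_div_iff₀ hδu0 hu0]
      have h3 : Vb j ≤ 2^d * δ := by
        have h4 := hVb2V j hb
        have h5 := hVδ j
        nlinarith [h2dpos]
      nlinarith [mul_le_mul_of_nonneg_left h3 (mul_nonneg hc0.le hu0.le)]
    calc L j i / hg j i ≤ Lb j i / hg j i := h1
      _ = c * Vb j / (δ*u) := e
      _ ≤ c*2^d/u := h2
  set bigs : Finset (Fin m) := Finset.univ.filter (fun j => δ*u/2 < V j) with hbigsdef
  have hsm1 : (Finset.univ.filter (fun j => ¬ (δ*u/2 < V j))).card ≤ 1 := by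
    rw [Finset.card_le_one]
    intro x hx y hy
    rw [Finset.mem_filter] at hx hy
    exact hsmall x y (not_lt.mp hx.2) (not_lt.mp hy.2)
  set F : Fin m → (Fin d → Fin (K+1) × Fin (A+1) × Fin (B+1)) := fun j i =>
    (⟨min (kk j i) K, Nat.lt_succ_of_le (min_le_right _ _)⟩,
     ⟨min (aa j i) A, Nat.lt_succ_of_le (min_le_right _ _)⟩,
     ⟨min (bb j i) B, Nat.lt_succ_of_le (min_le_right _ _)⟩) with hF
  have hFinj : Set.InjOn F bigs := by
    intro x hx y hy hxy
    rw [Finset.mem_coe, hbigsdef, Finset.mem_filter] at hx hy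
    have hbx := hx.2
    have hby := hy.2
    apply hinj x y hbx hby
    · funext i
      have h1 := congrFun hxy i
      simp only [hF, Prod.mk.injEq, Fin.mk.injEq] at h1
      have h2 := h1.1
      rwa [min_eq_left (hKK x hbx i), min_eq_left (hKK y hby i)] at h2
    · funext i
      have h1 := congrFun hxy i
      simp only [hF, Prod.mk.injEq, Fin.mk.injEq] at h1
      have h2 := h1.2.1
      rwa [min_eq_left (haA x hbx i), min_eq_left (haA y hby i)] at h2
    · funext i
      have h1 := congrFun hxy i
      simp only [hF, Prod.mk.injEq, Fin.mk.injEq] at h1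
      have h2 := h1.2.2
      rwa [min_eq_left (hbB x hbx i), min_eq_left (hbB y hby i)] at h2
  have hcard : bigs.card ≤ ((K+1) * ((A+1) * (B+1)))^d := by
    have h1 := Finset.card_le_card_of_injOn F (fun x _ => Finset.mem_univ (F x)) hFinj
    calc bigs.card ≤ (Finset.univ : Finset (Fin d → Fin (K+1) × Fin (A+1) × Fin (B+1))).card := h1
      _ = ((K+1) * ((A+1) * (B+1)))^d := by
        rw [Finset.card_univ]
        simp [Fintype.card_prod, Fintype.card_fin]
  have hmcard : m ≤ ((K+1) * ((A+1) * (B+1)))^d + 1 := by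
    have hpart : bigs.card + (Finset.univ.filter (fun j => ¬ (δ*u/2 < V j))).card = m := by
      rw [hbigsdef, Finset.card_filter_add_card_filter_not, Finset.card_univ,
        Fintype.card_fin]
    omega
  have hKA : ((K:ℝ)+1) ≤ C₁ * (δ*u) ^ (-a) := by
    have h1 : (K:ℝ) < Real.logb 2 (2/(δ*u)) + 1 := Nat.ceil_lt_add_one hlogb0
    have hlog2 : (1:ℝ)/2 < Real.log 2 := by
      have := Real.log_two_gt_d9
      linarith
    have hlogy0 : 0 ≤ Real.log (2/(δ*u)) := Real.log_nonneg hyge1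
    have h2 : Real.logb 2 (2/(δ*u)) ≤ 2 * Real.log (2/(δ*u)) := by
      rw [Real.logb, div_le_iff₀ (by linarith)]
      nlinarith
    have h3 : Real.log (2/(δ*u)) ≤ (2/(δ*u)) ^ a / a :=
      Real.log_le_rpow_div (by positivity) ha0
    have hya1 : (1:ℝ) ≤ (2/(δ*u)) ^ a := by
      calc (1:ℝ) = 1 ^ a := (Real.one_rpow a).symm
        _ ≤ (2/(δ*u)) ^ a := Real.rpow_le_rpow (by norm_num) hyge1 ha0.le
    have h4 : ((K:ℝ)+1) ≤ (2/a + 2) * (2/(δ*u)) ^ a := by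
      have h5 : ((K:ℝ)+1) ≤ 2 * ((2/(δ*u)) ^ a / a) + 2 := by
        have h6 : Real.log (2/(δ*u)) ≤ (2/(δ*u)) ^ a / a := h3
        nlinarith
      have h6 : 2 * ((2/(δ*u)) ^ a / a) = (2/a) * (2/(δ*u)) ^ a := by
        field_simp
      rw [h6] at h5
      nlinarith [hya1, ha0]
    have hey : (2/(δ*u)) ^ a = 2 ^ a * (δ*u) ^ (-a) := by
      rw [Real.div_rpow (by norm_num) hδu0.le, Real.rpow_neg hδu0.le, div_eq_mul_inv]
    calc ((K:ℝ)+1) ≤ (2/a+2) * (2/(δ*u))^a := h4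
      _ = C₁ * (δ*u)^(-a) := by rw [hC₁, hey]; ring
  have hδuinv1 : (1:ℝ) ≤ (δ*u)⁻¹ := (one_le_inv₀ hδu0).mpr hδu1
  have huinv1 : (1:ℝ) ≤ u⁻¹ := (one_le_inv₀ hu0).mpr hu1
  have hAA : ((A:ℝ)+1) ≤ (c+1) * (δ*u)⁻¹ := by
    have h1 : (A:ℝ) ≤ c/(δ*u) := Nat.floor_le (by positivity)
    have h2 : c/(δ*u) = c * (δ*u)⁻¹ := div_eq_mul_inv _ _
    nlinarith [hδuinv1, hc0, mul_le_mul_of_nonneg_left hδuinv1 hc0.le]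
  have hBB : ((B:ℝ)+1) ≤ (c*2^d+1) * u⁻¹ := by
    have h1 : (B:ℝ) ≤ c*2^d/u := Nat.floor_le (by positivity)
    have h2 : c*2^d/u = (c*2^d) * u⁻¹ := div_eq_mul_inv _ _
    nlinarith [huinv1]
  have hprod : ((K:ℝ)+1) * (((A:ℝ)+1) * ((B:ℝ)+1)) ≤
      (C₁ * (c+1) * (c*2^d+1)) * ((δ*u) ^ (-a) * ((δ*u)⁻¹ * u⁻¹)) := by
    have hKnn : (0:ℝ) ≤ (K:ℝ)+1 := by positivity
    have hABnn : (0:ℝ) ≤ ((A:ℝ)+1) * ((B:ℝ)+1) := by positivity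
    have hrp : (0:ℝ) < (δ*u) ^ (-a) := Real.rpow_pos_of_pos hδu0 _
    have hAB : ((A:ℝ)+1) * ((B:ℝ)+1) ≤ ((c+1) * (δ*u)⁻¹) * ((c*2^d+1) * u⁻¹) :=
      mul_le_mul hAA hBB (by positivity) (by positivity)
    have := mul_le_mul hKA hAB hABnn (by positivity)
    refine this.trans (le_of_eq ?_)
    ring
  have hpow : (((K:ℝ)+1) * (((A:ℝ)+1) * ((B:ℝ)+1)))^d ≤
      ((C₁ * (c+1) * (c*2^d+1)) * ((δ*u) ^ (-a) * ((δ*u)⁻¹ * u⁻¹)))^d :=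
    pow_le_pow_left₀ (by positivity) hprod d
  have ead : -a * (d:ℝ) = -ε := by
    rw [ha]
    field_simp
  have ea : ((δ*u) ^ (-a))^(d:ℕ) = (δ*u) ^ (-ε) := by
    rw [← Real.rpow_natCast ((δ*u) ^ (-a)) d, ← Real.rpow_mul hδu0.le, ead]
  have eb : ((δ*u)⁻¹)^(d:ℕ) = (δ*u) ^ (-(d:ℝ)) := by
    rw [inv_pow, ← Real.rpow_natCast (δ*u) d, ← Real.rpow_neg hδu0.le]
  have ec : (u⁻¹)^(d:ℕ) = u ^ (-(d:ℝ)) := by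
    rw [inv_pow, ← Real.rpow_natCast u d, ← Real.rpow_neg hu0.le]
  have hXeq : ((δ*u) ^ (-a) * ((δ*u)⁻¹ * u⁻¹))^(d:ℕ)
      = δ ^ (-((d:ℝ)+ε)) * u ^ (-(2*(d:ℝ)+ε)) := by
    rw [mul_pow, mul_pow, ea, eb, ec, ← mul_assoc, ← Real.rpow_add hδu0,
      Real.mul_rpow hδ0.le hu0.le, mul_assoc, ← Real.rpow_add hu0]
    have e1 : -ε + -(d:ℝ) = -((d:ℝ)+ε) := by ring
    rw [e1]
    have e2 : -((d:ℝ)+ε) + -(d:ℝ) = -(2*(d:ℝ)+ε) := by ring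
    rw [e2]
  have hmR : (m:ℝ) ≤ (((K:ℝ)+1) * (((A:ℝ)+1) * ((B:ℝ)+1)))^d + 1 := by
    exact_mod_cast hmcard
  have hchain : (((K:ℝ)+1) * (((A:ℝ)+1) * ((B:ℝ)+1)))^d
      ≤ C₂ * (δ ^ (-((d:ℝ)+ε)) * u ^ (-(2*(d:ℝ)+ε))) := by
    refine hpow.trans (le_of_eq ?_)
    rw [mul_pow, hXeq, hC₂]
  have hδmono : δ ^ (-((d:ℝ)+ε)) ≤ δ ^ (-(2*(d:ℝ)-1+ε)) :=
    Real.rpow_le_rpow_of_exponent_ge hδ0 hδ1 (by linarith)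
  have hu_nn : (0:ℝ) ≤ u ^ (-(2*(d:ℝ)+ε)) := Real.rpow_nonneg hu0.le _
  have hδ_nn : (0:ℝ) ≤ δ ^ (-(2*(d:ℝ)-1+ε)) := Real.rpow_nonneg hδ0.le _
  have h1le : (1:ℝ) ≤ u ^ (-(2*(d:ℝ)+ε)) * δ ^ (-(2*(d:ℝ)-1+ε)) := by
    have hu1' : (1:ℝ) ≤ u ^ (-(2*(d:ℝ)+ε)) :=
      Real.one_le_rpow_of_pos_of_le_one_of_nonpos hu0 hu1 (by nlinarith)
    have hδ1' : (1:ℝ) ≤ δ ^ (-(2*(d:ℝ)-1+ε)) :=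
      Real.one_le_rpow_of_pos_of_le_one_of_nonpos hδ0 hδ1 (by nlinarith)
    nlinarith
  have hmid : C₂ * (δ ^ (-((d:ℝ)+ε)) * u ^ (-(2*(d:ℝ)+ε)))
      ≤ C₂ * (δ ^ (-(2*(d:ℝ)-1+ε)) * u ^ (-(2*(d:ℝ)+ε))) := by
    apply mul_le_mul_of_nonneg_left _ hC₂0.le
    exact mul_le_mul_of_nonneg_right hδmono hu_nn
  calc (m:ℝ) ≤ (((K:ℝ)+1) * (((A:ℝ)+1) * ((B:ℝ)+1)))^d + 1 := hmR
    _ ≤ C₂ * (δ ^ (-(2*(d:ℝ)-1+ε)) * u ^ (-(2*(d:ℝ)+ε))) +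
        u ^ (-(2*(d:ℝ)+ε)) * δ ^ (-(2*(d:ℝ)-1+ε)) := by linarith
    _ = (1 + C₂) * u ^ (-(2*(d:ℝ)+ε)) * δ ^ (-(2*(d:ℝ)-1+ε)) := by ring
end

section
/- Let $\mathcal{Q}^*$ denote the set of all closed axis-parallel hypercubes contained in $[0,1]^d$, equipped with the metric $\rho^*(Q_1, Q_2) = \sqrt{|Q_1 \triangle Q_2|}$. Then there exists a constant $C$ depending only on $d$ such that for all $u, \delta \in (0,1]$, the packing number satisfies $\mathcal{K}((\delta u)^{1/2}, \rho^*, \{Q \in \mathcal{Q}^* : |Q| \le \delta\}) \le C\, \delta^{-1} u^{-(d+1)}$. -/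
open MeasureTheory

open scoped symmDiff

/-!
Cover the parameter space of the cubes, corner `t ∈ [0,1]^d` and side `h ≤ s := δ^{1/d}`, by a
grid of mesh `ε = u s / (4d)`. Two cubes whose parameters lie in the same grid cell overlap in a
cube of side at least `max h h' - 2ε`, so their symmetric difference has volume at most
`4 d ε s^{d-1} = δ u`. Hence a `(δu)^{1/2}`-separated family meets each cell at most once, and
there are at most `(8d/(us))^d · (8d/u) = (8d)^{d+1} δ⁻¹ u^{-(d+1)}` cells.
-/

lemma abs_sub_lt_of_natFloor_div_eq {x y ε : ℝ} (hx : 0 ≤ x) (hy : 0 ≤ y) (hε : 0 < ε)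
    (h : ⌊x / ε⌋₊ = ⌊y / ε⌋₊) : |x - y| < ε := by
  have hfloor : ⌊x / ε⌋ = ⌊y / ε⌋ := by
    rw [← Int.natCast_floor_eq_floor (by positivity), ← Int.natCast_floor_eq_floor (by positivity),
      h]
  have := Int.abs_sub_lt_one_of_floor_eq_floor hfloor
  rwa [← sub_div, abs_div, abs_of_pos hε, div_lt_one hε] at this

lemma natFloor_div_add_one_le {x ε : ℝ} (hε : 0 < ε) (hεx : ε ≤ x) :
    (⌊x / ε⌋₊ + 1 : ℝ) ≤ 2 * x / ε := by
  have hfloor : (⌊x / ε⌋₊ : ℝ) ≤ x / ε := Nat.floor_le (div_pos (hε.trans_le hεx) hε).le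
  have hone : 1 ≤ x / ε := (one_le_div hε).mpr hεx
  linarith [mul_div_assoc 2 x ε]

lemma natFloor_div_add_one_mul_pow_le {n : ℕ} (hn : 1 ≤ n) {u s ε : ℝ} (hu0 : 0 < u)
    (hu1 : u ≤ 1) (hs0 : 0 < s) (hs1 : s ≤ 1) (hε : 4 * n * ε = u * s) :
    ((⌊s / ε⌋₊ + 1) * (⌊1 / ε⌋₊ + 1) ^ n : ℝ) ≤
      (8 * n) ^ (n + 1) * (s ^ n)⁻¹ * (u ^ (n + 1))⁻¹ := by
  have hn1 : (1 : ℝ) ≤ n := by exact_mod_cast hn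
  have hε0 : 0 < ε := by nlinarith [mul_pos hu0 hs0]
  have hεs : ε ≤ s := by nlinarith
  have hcoarse : 2 * s / ε = 8 * n / u := by
    rw [div_eq_div_iff hε0.ne' hu0.ne']
    linear_combination -2 * hε
  have hfine : 2 * 1 / ε = 8 * n / (u * s) := by
    rw [div_eq_div_iff hε0.ne' (by positivity)]
    linear_combination -2 * hε
  calc ((⌊s / ε⌋₊ + 1) * (⌊1 / ε⌋₊ + 1) ^ n : ℝ) ≤ (2 * s / ε) * (2 * 1 / ε) ^ n := by
        gcongr
        exacts [natFloor_div_add_one_le hε0 hεs, natFloor_div_add_one_le hε0 (hεs.trans hs1)]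
    _ = (8 * n) ^ (n + 1) * (s ^ n)⁻¹ * (u ^ (n + 1))⁻¹ := by
        rw [hcoarse, hfine, div_pow, mul_pow u s n]
        field_simp
        ring

theorem Fintype.card_le_prod_natFloor_of_separated {α κ : Type*} [Fintype α] [Fintype κ]
    (x : α → κ → ℝ) (L : κ → ℝ) {ε : ℝ} (hε : 0 < ε) (hx : ∀ a k, 0 ≤ x a k ∧ x a k ≤ L k)
    (hsep : ∀ a b, (∀ k, |x a k - x b k| < ε) → a = b) :
    Fintype.card α ≤ ∏ k, (⌊L k / ε⌋₊ + 1) := by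
  classical
  let cell : α → (k : κ) → Fin (⌊L k / ε⌋₊ + 1) := fun a k =>
    ⟨⌊x a k / ε⌋₊, Nat.lt_succ_of_le (Nat.floor_le_floor (by gcongr; exact (hx a k).2))⟩
  have hcell : Function.Injective cell := fun a b hab => hsep a b fun k =>
    abs_sub_lt_of_natFloor_div_eq (hx a k).1 (hx b k).1 hε (congrArg Fin.val (congrFun hab k))
  simpa [cell] using Fintype.card_le_of_injective cell hcell

lemma measureReal_symmDiff_eq_add_sub_inter {α : Type*} [MeasurableSpace α] {μ : Measure α}
    {s t : Set α} (hs : MeasurableSet s) (ht : MeasurableSet t)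
    (h₁ : μ s ≠ ⊤ := by finiteness) (h₂ : μ t ≠ ⊤ := by finiteness) :
    μ.real (s ∆ t) = μ.real s + μ.real t - 2 * μ.real (s ∩ t) := by
  have hs' := measureReal_sdiff_add_inter ht h₁
  have ht' := measureReal_sdiff_add_inter hs h₂
  rw [Set.inter_comm] at ht'
  rw [measureReal_symmDiff_eq hs ht h₁ h₂]
  linarith

section Cube

variable {ι : Type*}

def cube (t : ι → ℝ) (h : ℝ) : Set (ι → ℝ) := Set.Icc t (fun i => t i + h)

lemma measurableSet_cube [Fintype ι] (t : ι → ℝ) (h : ℝ) : MeasurableSet (cube t h) :=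
  measurableSet_Icc

lemma volume_cube [Fintype ι] (t : ι → ℝ) (h : ℝ) :
    volume (cube t h) = ENNReal.ofReal h ^ Fintype.card ι := by
  simp [cube, Real.volume_Icc_pi]

lemma volume_cube_ne_top [Fintype ι] (t : ι → ℝ) (h : ℝ) : volume (cube t h) ≠ ⊤ :=
  isCompact_Icc.measure_ne_top

lemma measureReal_cube [Fintype ι] (t : ι → ℝ) (h : ℝ) :
    volume.real (cube t h) = max h 0 ^ Fintype.card ι := by
  rw [measureReal_def, volume_cube, ENNReal.toReal_pow, ENNReal.toReal_ofReal']

lemma le_of_measureReal_cube_le_pow [Fintype ι] [Nonempty ι] {t : ι → ℝ} {h s : ℝ} (hh : 0 ≤ h)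
    (hs : 0 ≤ s) (hvol : volume.real (cube t h) ≤ s ^ Fintype.card ι) : h ≤ s := by
  rwa [measureReal_cube, max_eq_left hh, pow_le_pow_iff_left₀ hh hs Fintype.card_ne_zero] at hvol

lemma cube_sup_subset_inter {a b : ι → ℝ} {ha hb ε : ℝ} (hab : ∀ i, |a i - b i| ≤ ε) :
    cube (a ⊔ b) (min ha hb - ε) ⊆ cube a ha ∩ cube b hb := by
  rintro x ⟨hlo, hhi⟩
  refine ⟨⟨le_trans le_sup_left hlo, fun i => ?_⟩, ⟨le_trans le_sup_right hlo, fun i => ?_⟩⟩ <;>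
  · have := hhi i
    have := abs_le.mp (hab i)
    simp only [Pi.sup_apply] at *
    grind

theorem measureReal_symmDiff_cube_le [Fintype ι] {a b : ι → ℝ} {ha hb ε s : ℝ} (h0a : 0 ≤ ha)
    (h0b : 0 ≤ hb) (has : ha ≤ s) (hbs : hb ≤ s) (hab : ∀ i, |a i - b i| ≤ ε) (hh : |ha - hb| ≤ ε) :
    volume.real (cube a ha ∆ cube b hb) ≤ 4 * Fintype.card ι * ε * s ^ (Fintype.card ι - 1) := by
  set n := Fintype.card ι
  set c := max (min ha hb - ε) 0
  set s₀ := max ha hb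
  have hε : 0 ≤ ε := (abs_nonneg _).trans hh
  have hc0 : 0 ≤ c := le_max_right _ _
  have hs₀ : 0 ≤ s₀ := le_max_of_le_left h0a
  have hcs₀ : c ≤ s₀ := max_le (by linarith [min_le_max (a := ha) (b := hb)]) hs₀
  have hgap : s₀ - c ≤ 2 * ε := by
    have hspread : s₀ - min ha hb ≤ ε := (max_sub_min_eq_abs' ha hb).trans_le hh
    have hcmin : min ha hb - ε ≤ c := le_max_left _ _
    linarith
  have hinter : c ^ n ≤ volume.real (cube a ha ∩ cube b hb) := by
    rw [← measureReal_cube (a ⊔ b)]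
    exact measureReal_mono (cube_sup_subset_inter hab)
      (measure_ne_top_of_subset Set.inter_subset_left (volume_cube_ne_top a ha))
  have hpow : s₀ ^ n - c ^ n ≤ (s₀ - c) * n * s₀ ^ (n - 1) := by
    have := abs_pow_sub_pow_le s₀ c n
    rwa [abs_of_nonneg (sub_nonneg.mpr (pow_le_pow_left₀ hc0 hcs₀ n)),
      abs_of_nonneg (sub_nonneg.mpr hcs₀), abs_of_nonneg hs₀, abs_of_nonneg hc0,
      max_eq_left hcs₀] at this
  have hsn : s₀ ^ (n - 1) ≤ s ^ (n - 1) := pow_le_pow_left₀ hs₀ (max_le has hbs) _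
  calc volume.real (cube a ha ∆ cube b hb)
      ≤ ha ^ n + hb ^ n - 2 * c ^ n := by
        rw [measureReal_symmDiff_eq_add_sub_inter (measurableSet_cube a ha)
          (measurableSet_cube b hb) (volume_cube_ne_top a ha)
          (volume_cube_ne_top b hb), measureReal_cube, measureReal_cube,
          max_eq_left h0a, max_eq_left h0b]
        linarith
    _ ≤ 2 * (s₀ ^ n - c ^ n) := by
        linarith [pow_le_pow_left₀ h0a (le_max_left ha hb) n,
          pow_le_pow_left₀ h0b (le_max_right ha hb) n]
    _ ≤ 2 * ((2 * ε) * n * s ^ (n - 1)) := by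
        gcongr
        exact hpow.trans (by gcongr)
    _ = 4 * n * ε * s ^ (n - 1) := by ring

theorem card_le_of_cube_packing {α : Type*} [Fintype α] [Fintype ι] (t : α → ι → ℝ) (h : α → ℝ)
    {s ε : ℝ} (hε : 0 < ε) (ht : ∀ a i, 0 ≤ t a i ∧ t a i ≤ 1) (hh : ∀ a, 0 ≤ h a ∧ h a ≤ s)
    (hsep : ∀ a b, a ≠ b → 4 * Fintype.card ι * ε * s ^ (Fintype.card ι - 1) <
      volume.real (cube (t a) (h a) ∆ cube (t b) (h b))) :
    Fintype.card α ≤ (⌊s / ε⌋₊ + 1) * (⌊1 / ε⌋₊ + 1) ^ Fintype.card ι := by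
  let x : α → Option ι → ℝ := fun a o => o.elim (h a) (t a)
  let L : Option ι → ℝ := fun o => o.elim s 1
  have hx : ∀ a o, 0 ≤ x a o ∧ x a o ≤ L o := by
    rintro a (_ | i)
    exacts [hh a, ht a i]
  have hcell : ∀ a b, (∀ o, |x a o - x b o| < ε) → a = b := fun a b hab => by
    by_contra hne
    exact (hsep a b hne).not_ge <| measureReal_symmDiff_cube_le (hh a).1 (hh b).1 (hh a).2
      (hh b).2 (fun i => (hab (some i)).le) (hab none).le
  simpa [Fintype.prod_option, L] using
    Fintype.card_le_prod_natFloor_of_separated x L hε hx hcell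

end Cube

/-- Packing-number bound for hypercubes in `[0,1]^d` of volume at most
`δ`: any family of such cubes with pairwise `ρ*`-distance exceeding `(δu)^{1/2}`
has at most `C δ⁻¹ u^{-(d+1)}` members, with `C` depending only on `d`. -/
theorem packing_hypercubes (d : ℕ) (hd : 1 ≤ d) :
    ∃ C : ℝ, 0 < C ∧ ∀ u δ : ℝ, u ∈ Set.Ioc (0:ℝ) 1 → δ ∈ Set.Ioc (0:ℝ) 1 →
      ∀ (m : ℕ) (t : Fin m → (Fin d → ℝ)) (h : Fin m → ℝ),
        (∀ j, 0 < h j) →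
        (∀ j i, 0 ≤ t j i ∧ t j i + h j ≤ 1) →
        (∀ j, (volume (Set.Icc (t j) (fun i => t j i + h j))).toReal ≤ δ) →
        (∀ j k, j ≠ k →
          Real.sqrt (δ * u) < rhoStar (Set.Icc (t j) (fun i => t j i + h j))
            (Set.Icc (t k) (fun i => t k i + h k))) →
        (m : ℝ) ≤ C * δ⁻¹ * (u ^ (d + 1))⁻¹ := by
  have hd0 : (0 : ℝ) < d := by exact_mod_cast hd
  refine ⟨(8 * d) ^ (d + 1), by positivity, ?_⟩
  rintro u δ ⟨hu0, hu1⟩ ⟨hδ0, hδ1⟩ m t h hpos hbox hvol hpack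
  set s := δ ^ (d : ℝ)⁻¹
  have hsd : s ^ d = δ := Real.rpow_inv_natCast_pow hδ0.le (by omega)
  have hs0 : 0 < s := by positivity
  have hs1 : s ≤ 1 := Real.rpow_le_one hδ0.le hδ1 (by positivity)
  set ε := u * s / (4 * d)
  have hε : 4 * d * ε = u * s := by simp only [ε]; field_simp
  have hdist : 4 * d * ε * s ^ (d - 1) = δ * u := by
    have hpow : s ^ (d - 1) * s = δ := by rw [← pow_succ, Nat.sub_add_cancel hd, hsd]
    linear_combination s ^ (d - 1) * hε + u * hpow
  have : Nonempty (Fin d) := ⟨⟨0, hd⟩⟩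
  have hcard := card_le_of_cube_packing t h (by positivity : 0 < ε)
    (fun j i => ⟨(hbox j i).1, by linarith [(hbox j i).2, hpos j]⟩)
    (fun j => ⟨(hpos j).le, le_of_measureReal_cube_le_pow (t := t j) (hpos j).le hs0.le
      (by rw [Fintype.card_fin, hsd]; exact hvol j)⟩)
    (fun j k hjk => by
      rw [Fintype.card_fin, hdist]
      exact (Real.sqrt_lt_sqrt_iff (by positivity)).mp (hpack j k hjk))
  rw [Fintype.card_fin, Fintype.card_fin] at hcard
  calc (m : ℝ) ≤ (⌊s / ε⌋₊ + 1) * (⌊1 / ε⌋₊ + 1) ^ d := by exact_mod_cast hcard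
    _ ≤ (8 * d) ^ (d + 1) * (s ^ d)⁻¹ * (u ^ (d + 1))⁻¹ :=
      natFloor_div_add_one_mul_pow_le hd hu0 hu1 hs0 hs1 hε
    _ = (8 * d) ^ (d + 1) * δ⁻¹ * (u ^ (d + 1))⁻¹ := by rw [hsd]
end

section
/- Let $a_1, a_2 \in \mathbb{S}^{d-1}$ and $\alpha, \beta \in [0, \sqrt{d}]$. Define half-spaces $H_{a,\gamma} = \{x \in [0,1]^d : \langle x, a\rangle \ge \gamma\}$. Then there exists a constant $C$ depending only on $d$ such that $|H_{a_1,\alpha} \triangle H_{a_2,\beta}| \le C(\sphericalangle(a_1, a_2) + |\alpha - \beta|)$, where $\sphericalangle(a_1,a_2) = \arccos(\langle a_1, a_2\rangle)$ is the spherical angle. -/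
/-! Splitting `H_{a₁,α} ∆ H_{a₂,β}` through `H_{a₁,β}` reduces everything to slabs
`{γ ≤ ⟨x,a⟩ < γ + δ}` of the cube. Some coordinate of a unit vector `a` has `|a i| ≥ 1/√d`, and
replacing `x i` by `⟨x,a⟩` is a linear map of determinant `a i` carrying the slab into a box of
volume `δ`, so the slab has volume at most `√d δ`. Changing the offset moves one slab of width
`|α - β|`; changing the normal moves `⟨x,a⟩` on the cube by at most `√d ‖a₁ - a₂‖` (Cauchy–Schwarz),
and the chord `‖a₁ - a₂‖ = √(2 - 2 cos θ)` is at most the angle `θ`. -/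

open MeasureTheory

/-- The half-space `H_{a,γ} = {x ∈ [0,1]^d : ⟨x,a⟩ ≥ γ}`. -/
def halfSpace {d : ℕ} (a : Fin d → ℝ) (γ : ℝ) : Set (Fin d → ℝ) :=
  {x | (∀ i, x i ∈ Set.Icc (0:ℝ) 1) ∧ γ ≤ ∑ i, x i * a i}

open Matrix
open scoped symmDiff

section

variable {ι : Type*} [Fintype ι]

lemma Matrix.det_updateRow_one [DecidableEq ι] (i : ι) (a : ι → ℝ) :
    ((1 : Matrix ι ι ℝ).updateRow i a).det = a i := by
  have h : ∑ k, a k • (1 : Matrix ι ι ℝ) k = a := by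
    ext j; simp [Matrix.one_apply]
  simpa [h] using det_updateRow_sum (1 : Matrix ι ι ℝ) i a

lemma exists_inv_card_le_sq {a : ι → ℝ} (ha : ∑ i, a i ^ 2 = 1) :
    ∃ i, (Fintype.card ι : ℝ)⁻¹ ≤ a i ^ 2 := by
  have hne : (Finset.univ : Finset ι).Nonempty :=
    Finset.nonempty_of_sum_ne_zero (ha.trans_ne one_ne_zero)
  have hcard : (0 : ℝ) < Fintype.card ι := by
    exact_mod_cast Fintype.card_pos_iff.2 (Finset.univ_nonempty_iff.1 hne)
  obtain ⟨i, -, hi⟩ := Finset.exists_le_of_sum_le hne (f := fun _ => (Fintype.card ι : ℝ)⁻¹)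
    (g := fun i => a i ^ 2) (by simp [ha, hcard.ne'])
  exact ⟨i, hi⟩

lemma sqrt_sum_sub_sq_le_arccos {a b : ι → ℝ} (ha : ∑ i, a i ^ 2 = 1) (hb : ∑ i, b i ^ 2 = 1) :
    √(∑ i, (a i - b i) ^ 2) ≤ Real.arccos (∑ i, a i * b i) := by
  set t := ∑ i, a i * b i
  have hsub : ∑ i, (a i - b i) ^ 2 = 2 - 2 * t := by
    simp only [sub_sq, Finset.sum_add_distrib, Finset.sum_sub_distrib, ha, hb, t, Finset.mul_sum]
    ring_nf
  have hadd : ∑ i, (a i + b i) ^ 2 = 2 + 2 * t := by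
    simp only [add_sq, Finset.sum_add_distrib, ha, hb, t, Finset.mul_sum]
    ring_nf
  have ht₁ : -1 ≤ t := by linarith [hadd ▸ Finset.sum_nonneg fun i _ => sq_nonneg (a i + b i)]
  have ht₂ : t ≤ 1 := by linarith [hsub ▸ Finset.sum_nonneg fun i _ => sq_nonneg (a i - b i)]
  have hcos := Real.one_sub_sq_div_two_le_cos (x := Real.arccos t)
  rw [Real.cos_arccos ht₁ ht₂] at hcos
  exact Real.sqrt_le_iff.2 ⟨Real.arccos_nonneg t, by linarith⟩

lemma dotProduct_le_add_of_forall_mem_Icc {x : ι → ℝ} (hx : ∀ i, x i ∈ Set.Icc (0 : ℝ) 1)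
    (a b : ι → ℝ) : x ⬝ᵥ a ≤ x ⬝ᵥ b + √(Fintype.card ι) * √(∑ i, (a i - b i) ^ 2) := by
  have hx2 : ∑ i, x i ^ 2 ≤ Fintype.card ι := by
    simpa using Finset.sum_le_sum fun i (_ : i ∈ Finset.univ) =>
      pow_le_one₀ (n := 2) (hx i).1 (hx i).2
  have hcs := Real.sum_mul_le_sqrt_mul_sqrt Finset.univ x (a - b)
  have hdiff : x ⬝ᵥ a - x ⬝ᵥ b = ∑ i, x i * (a - b) i := by
    rw [← dotProduct_sub]; rfl
  have hsqrt := mul_le_mul_of_nonneg_right (Real.sqrt_le_sqrt hx2)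
    (Real.sqrt_nonneg (∑ i, (a i - b i) ^ 2))
  simp only [Pi.sub_apply] at hcs hdiff
  linarith

end

namespace halfSpace

variable {d : ℕ}

lemma antitone (a : Fin d → ℝ) : Antitone (halfSpace a) :=
  fun _ _ hγ _ hx => ⟨hx.1, hγ.trans hx.2⟩

lemma diff_subset_diff_of_le {a b : Fin d → ℝ} {ε : ℝ}
    (h : ∀ x : Fin d → ℝ, (∀ i, x i ∈ Set.Icc (0 : ℝ) 1) → x ⬝ᵥ a ≤ x ⬝ᵥ b + ε) (γ : ℝ) :
    halfSpace a γ \ halfSpace b γ ⊆ halfSpace a γ \ halfSpace a (γ + ε) := by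
  rintro x ⟨hxa, hxb⟩
  refine ⟨hxa, fun hx => hxb ⟨hxa.1, ?_⟩⟩
  have hab : x ⬝ᵥ a ≤ x ⬝ᵥ b + ε := h x hxa.1
  have hγε : γ + ε ≤ x ⬝ᵥ a := hx.2
  show γ ≤ x ⬝ᵥ b
  linarith

lemma volume_diff_le_of_ne_zero {a : Fin d → ℝ} {i : Fin d} (hi : a i ≠ 0) (γ δ : ℝ) :
    volume (halfSpace a γ \ halfSpace a (γ + δ)) ≤ ENNReal.ofReal (δ / |a i|) := by
  set f := toLin' ((1 : Matrix (Fin d) (Fin d) ℝ).updateRow i a)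
  have hf : LinearMap.det f = a i := by rw [LinearMap.det_toLin', det_updateRow_one]
  have hsub : halfSpace a γ \ halfSpace a (γ + δ) ⊆
      f ⁻¹' Set.Icc (Function.update 0 i γ) (Function.update 1 i (γ + δ)) := by
    rintro x ⟨⟨hx, hγ : γ ≤ x ⬝ᵥ a⟩, hγδ⟩
    have hγδ : x ⬝ᵥ a < γ + δ := lt_of_not_ge fun h => hγδ ⟨hx, h⟩
    have hfi : f x i = x ⬝ᵥ a := by simp [f, mulVec, dotProduct_comm]
    have hfj : ∀ j ≠ i, f x j = x j := fun j hj => by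
      simp [f, mulVec, updateRow_ne hj, dotProduct, one_apply]
    refine ⟨fun j => ?_, fun j => ?_⟩ <;> rcases eq_or_ne j i with rfl | hj
    · simpa [hfi] using hγ
    · simpa [hfj j hj, hj] using (hx j).1
    · simpa [hfi] using hγδ.le
    · simpa [hfj j hj, hj] using (hx j).2
  calc volume (halfSpace a γ \ halfSpace a (γ + δ))
      ≤ volume (f ⁻¹' Set.Icc (Function.update 0 i γ) (Function.update 1 i (γ + δ))) :=
        measure_mono hsub
    _ = ENNReal.ofReal |(a i)⁻¹| * ENNReal.ofReal δ := by
        rw [Measure.addHaar_preimage_linearMap _ (hf ▸ hi), hf, Real.volume_Icc_pi,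
          Finset.prod_eq_single i (fun j _ hj => by simp [hj]) (by simp)]
        simp
    _ = ENNReal.ofReal (δ / |a i|) := by
        rw [← ENNReal.ofReal_mul (abs_nonneg _), abs_inv, div_eq_inv_mul]

lemma volume_diff_le {a : Fin d → ℝ} (ha : ∑ i, a i ^ 2 = 1) (γ : ℝ) {δ : ℝ} (hδ : 0 ≤ δ) :
    volume (halfSpace a γ \ halfSpace a (γ + δ)) ≤ ENNReal.ofReal (√d * δ) := by
  obtain ⟨i, hi⟩ := exists_inv_card_le_sq ha
  rw [Fintype.card_fin] at hi
  have hd : 0 < √(d : ℝ) := Real.sqrt_pos.2 (by exact_mod_cast Fin.pos i)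
  have hai : (√d)⁻¹ ≤ |a i| := by
    simpa [Real.sqrt_inv, Real.sqrt_sq_eq_abs] using Real.sqrt_le_sqrt hi
  have hai_pos : 0 < |a i| := (inv_pos.2 hd).trans_le hai
  refine (volume_diff_le_of_ne_zero (abs_pos.1 hai_pos) γ δ).trans (ENNReal.ofReal_le_ofReal ?_)
  calc δ / |a i| = |a i|⁻¹ * δ := div_eq_inv_mul _ _
    _ ≤ √d * δ := mul_le_mul_of_nonneg_right (inv_le_of_inv_le₀ hd hai) hδ

lemma volume_symmDiff_le_abs_sub {a : Fin d → ℝ} (ha : ∑ i, a i ^ 2 = 1) (α β : ℝ) :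
    volume (halfSpace a α ∆ halfSpace a β) ≤ ENNReal.ofReal (√d * |α - β|) := by
  wlog hαβ : α ≤ β generalizing α β
  · simpa [symmDiff_comm, abs_sub_comm] using this β α (le_of_not_ge hαβ)
  rw [symmDiff_of_ge (antitone a hαβ), abs_sub_comm, abs_of_nonneg (sub_nonneg.2 hαβ)]
  simpa using volume_diff_le ha α (sub_nonneg.2 hαβ)

lemma volume_symmDiff_le_sqrt_sum_sub_sq {a b : Fin d → ℝ} (ha : ∑ i, a i ^ 2 = 1)
    (hb : ∑ i, b i ^ 2 = 1) (γ : ℝ) :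
    volume (halfSpace a γ ∆ halfSpace b γ) ≤
      ENNReal.ofReal (2 * d * √(∑ i, (a i - b i) ^ 2)) := by
  set r := √(∑ i, (a i - b i) ^ 2)
  have hr : √(∑ i, (b i - a i) ^ 2) = r := by
    simp_rw [r, ← neg_sub (a _), neg_sq]
  have hε : 0 ≤ √d * r := by positivity
  have hab := diff_subset_diff_of_le (a := a) (b := b) (ε := √d * r) (fun x hx => by
    simpa using dotProduct_le_add_of_forall_mem_Icc hx a b) γ
  have hba := diff_subset_diff_of_le (a := b) (b := a) (ε := √d * r) (fun x hx => by
    simpa [hr] using dotProduct_le_add_of_forall_mem_Icc hx b a) γ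
  calc volume (halfSpace a γ ∆ halfSpace b γ)
      ≤ volume (halfSpace a γ \ halfSpace b γ) + volume (halfSpace b γ \ halfSpace a γ) :=
        measure_union_le _ _
    _ ≤ ENNReal.ofReal (√d * (√d * r)) + ENNReal.ofReal (√d * (√d * r)) :=
        add_le_add ((measure_mono hab).trans (volume_diff_le ha γ hε))
          ((measure_mono hba).trans (volume_diff_le hb γ hε))
    _ = ENNReal.ofReal (2 * d * r) := by
        rw [← ENNReal.ofReal_add (by positivity) (by positivity), ← mul_assoc,
          Real.mul_self_sqrt (Nat.cast_nonneg d)]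
        ring_nf

end halfSpace

theorem halfspace_symmDiff_bound_general (d : ℕ) :
    ∃ C : ℝ, 0 < C ∧
      ∀ (a₁ a₂ : Fin d → ℝ) (α β : ℝ),
        (∑ i, (a₁ i) ^ 2 = 1) → (∑ i, (a₂ i) ^ 2 = 1) →
        α ∈ Set.Icc (0:ℝ) (Real.sqrt d) → β ∈ Set.Icc (0:ℝ) (Real.sqrt d) →
        (volume (symmDiff (halfSpace a₁ α) (halfSpace a₂ β))).toReal ≤
          C * (Real.arccos (∑ i, a₁ i * a₂ i) + |α - β|) := by
  refine ⟨2 * d + 1, by positivity, fun a₁ a₂ α β ha₁ ha₂ _ _ => ?_⟩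
  set θ := Real.arccos (∑ i, a₁ i * a₂ i)
  set r := √(∑ i, (a₁ i - a₂ i) ^ 2)
  have hrθ : r ≤ θ := sqrt_sum_sub_sq_le_arccos ha₁ ha₂
  have hθ : 0 ≤ θ := Real.arccos_nonneg _
  have hsqrt : √(d : ℝ) ≤ 2 * d + 1 := by
    nlinarith [Real.sq_sqrt (Nat.cast_nonneg (α := ℝ) d), Real.sqrt_nonneg d]
  have hvol : volume (halfSpace a₁ α ∆ halfSpace a₂ β) ≤
      ENNReal.ofReal (√d * |α - β|) + ENNReal.ofReal (2 * d * r) :=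
    (measure_mono (symmDiff_triangle _ (halfSpace a₁ β) _)).trans <| (measure_union_le _ _).trans <|
      add_le_add (halfSpace.volume_symmDiff_le_abs_sub ha₁ α β)
        (halfSpace.volume_symmDiff_le_sqrt_sum_sub_sq ha₁ ha₂ β)
  refine ENNReal.toReal_le_of_le_ofReal (by positivity) (hvol.trans ?_)
  rw [← ENNReal.ofReal_add (by positivity) (by positivity)]
  refine ENNReal.ofReal_le_ofReal ?_
  nlinarith [mul_le_mul_of_nonneg_right hsqrt (abs_nonneg (α - β)),
    mul_le_mul_of_nonneg_left hrθ (by positivity : (0 : ℝ) ≤ 2 * d)]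

/-- The symmetric difference of two half-spaces is controlled by the
spherical angle between the normals plus the difference of the offsets:
`|H_{a₁,α} △ H_{a₂,β}| ≤ C (∢(a₁,a₂) + |α - β|)`. -/
theorem halfspace_symmDiff_bound (d : ℕ) (hd : 1 ≤ d) :
    ∃ C : ℝ, 0 < C ∧
      ∀ (a₁ a₂ : Fin d → ℝ) (α β : ℝ),
        (∑ i, (a₁ i) ^ 2 = 1) → (∑ i, (a₂ i) ^ 2 = 1) →
        α ∈ Set.Icc (0:ℝ) (Real.sqrt d) → β ∈ Set.Icc (0:ℝ) (Real.sqrt d) →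
        (volume (symmDiff (halfSpace a₁ α) (halfSpace a₂ β))).toReal ≤
          C * (Real.arccos (∑ i, a₁ i * a₂ i) + |α - β|) :=
  halfspace_symmDiff_bound_general d
end
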